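/- arXiv:1304.7895 — 2 statements merged into one kernel-verified Lean document; each statement's English description precedes it below -/
import Mathlib

section
/- (Generalized Bombieri–Lagarias theorem, direction (a)⇒(b), case a < σ.) Let a and σ be real numbers with a < σ. Let ι be a countable index type and ρ : ι → ℂ a family of complex numbers such that ρ(i) ≠ 2σ − a for every i, the family i ↦ (1 + |Re ρ(i)|)/(1 + |ρ(i) + a − 2σ|²) is summable, and Re ρ(i) ≤ σ for every i. Then for every positive integer n the family i ↦ Re(1 − ((ρ(i) − a)/(ρ(i) + a − 2σ))^n) is summable and Σ_i Re(1 − ((ρ(i) − a)/(ρ(i) + a − 2σ))^n) ≥ 0. -/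
/-!
Put `c = σ - a > 0` and `d = ρ + a - 2σ`, so that `Re d ≤ -c` and the quantity raised to the
`n`-th power is `w = (d + 2c)/d = 1 + 2c/d`, a point of the closed unit disc. For such `w`,
`Re (1 - wⁿ) ≥ 0`, and `‖1 - w‖² ≤ 2 Re (1 - w)` gives `Re (1 - wⁿ) ≤ n² Re (1 - w)`.
Finally `Re (1 - w) = 2c (-Re d)/‖d‖²` and `‖d‖ ≥ c`, which bounds the `i`-th term by a constant
times `(1 + |Re ρ|)/(1 + ‖d‖²)`; summability follows by comparison.
-/

open Complex

namespace Complex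

variable {w : ℂ}

lemma norm_one_sub_sq_le_two_mul_re (hw : ‖w‖ ≤ 1) : ‖1 - w‖ ^ 2 ≤ 2 * (1 - w).re := by
  have hnormSq : normSq w ≤ 1 := by
    rw [← Complex.sq_norm]; nlinarith [norm_nonneg w]
  rw [Complex.sq_norm, normSq_apply] at *
  simp only [sub_re, sub_im, one_re, one_im]
  nlinarith

lemma norm_one_sub_pow_le (hw : ‖w‖ ≤ 1) (n : ℕ) : ‖1 - w ^ n‖ ≤ n * ‖1 - w‖ := by
  induction n with
  | zero => simp
  | succ n ih =>
    calc ‖1 - w ^ (n + 1)‖ = ‖(1 - w ^ n) + w ^ n * (1 - w)‖ := by ring_nf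
      _ ≤ ‖1 - w ^ n‖ + ‖w ^ n‖ * ‖1 - w‖ := (norm_add_le _ _).trans_eq (by rw [norm_mul])
      _ ≤ n * ‖1 - w‖ + 1 * ‖1 - w‖ := by
          gcongr; rw [norm_pow]; exact pow_le_one₀ (norm_nonneg w) hw
      _ = (n + 1 : ℕ) * ‖1 - w‖ := by push_cast; ring

lemma re_one_sub_pow_nonneg (hw : ‖w‖ ≤ 1) (n : ℕ) : 0 ≤ (1 - w ^ n).re := by
  have : (w ^ n).re ≤ 1 :=
    (re_le_norm _).trans (by rw [norm_pow]; exact pow_le_one₀ (norm_nonneg w) hw)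
  simpa using this

lemma re_one_sub_pow_le (hw : ‖w‖ ≤ 1) (n : ℕ) :
    (1 - w ^ n).re ≤ (n : ℝ) ^ 2 * (1 - w).re := by
  induction n with
  | zero => simp
  | succ n ih =>
    -- `1 - wⁿ⁺¹ = (1 - wⁿ) + (1 - w) - (1 - wⁿ)(1 - w)`, and the cross term is `≤ 2n Re (1 - w)`
    have hcross : -((1 - w ^ n) * (1 - w)).re ≤ 2 * n * (1 - w).re :=
      calc -((1 - w ^ n) * (1 - w)).re ≤ ‖1 - w ^ n‖ * ‖1 - w‖ :=
            (neg_le_abs _).trans ((abs_re_le_norm _).trans_eq (norm_mul _ _))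
        _ ≤ n * ‖1 - w‖ * ‖1 - w‖ := by gcongr; exact norm_one_sub_pow_le hw n
        _ = n * ‖1 - w‖ ^ 2 := by ring
        _ ≤ n * (2 * (1 - w).re) := by gcongr; exact norm_one_sub_sq_le_two_mul_re hw
        _ = 2 * n * (1 - w).re := by ring
    have hsplit : (1 - w ^ (n + 1)).re
        = (1 - w ^ n).re + (1 - w).re - ((1 - w ^ n) * (1 - w)).re := by
      rw [← add_re, ← sub_re]; ring_nf
    rw [hsplit]
    push_cast
    nlinarith

variable {d : ℂ} {c : ℝ}

lemma norm_add_two_mul_div_le_one (hc : 0 ≤ c) (hd : d.re ≤ -c) : ‖(d + 2 * c) / d‖ ≤ 1 := by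
  rw [norm_div]
  refine div_le_one_of_le₀ ?_ (norm_nonneg d)
  rw [norm_def, norm_def]
  apply Real.sqrt_le_sqrt
  simp only [normSq_apply, add_re, add_im, mul_re, mul_im, ofReal_re, ofReal_im, re_ofNat,
    im_ofNat]
  nlinarith

lemma div_le_div_one_add_of_sq_le {x N : ℝ} (hc : 0 < c) (hx : 0 ≤ x) (hN : c ^ 2 ≤ N) :
    2 * c * x / N ≤ (2 * c + 2 / c) * x / (1 + N) := by
  have hN0 : 0 < N := (pow_pos hc 2).trans_le hN
  rw [div_le_div_iff₀ hN0 (by linarith)]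
  have : 2 * c * x ≤ 2 / c * x * N := by
    calc 2 * c * x = 2 / c * x * c ^ 2 := by field_simp
      _ ≤ 2 / c * x * N := by gcongr
  nlinarith

lemma re_one_sub_add_two_mul_div_le (hc : 0 < c) (hd : d.re ≤ -c) :
    (1 - (d + 2 * c) / d).re ≤ (2 * c + 2 / c) * -d.re / (1 + ‖d‖ ^ 2) := by
  have hd0 : d ≠ 0 := fun h => by simp [h] at hd; linarith
  have hsub : 1 - (d + 2 * c) / d = ((-(2 * c) : ℝ) : ℂ) / d := by
    field_simp; push_cast; ring
  rw [hsub, div_re, ofReal_re, ofReal_im, zero_mul, zero_div, add_zero, Complex.sq_norm,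
    show -(2 * c) * d.re / normSq d = 2 * c * -d.re / normSq d by ring]
  refine div_le_div_one_add_of_sq_le hc (by linarith) ?_
  rw [normSq_apply]
  nlinarith [sq_nonneg d.im]

end Complex

lemma sub_le_one_add_abs_mul_one_add_abs (b x : ℝ) : b - x ≤ (1 + |b|) * (1 + |x|) := by
  nlinarith [le_abs_self b, neg_abs_le x, abs_nonneg b, abs_nonneg x]

lemma sub_div_eq_add_two_mul_div (a σ : ℝ) (ρ : ℂ) :
    (ρ - a) / (ρ + a - 2 * σ)
      = (ρ + a - 2 * σ + 2 * ((σ - a : ℝ) : ℂ)) / (ρ + a - 2 * σ) := by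
  push_cast; ring_nf

section

variable {a σ : ℝ} {ρ : ℂ}

lemma re_add_sub_two_mul_le (hre : ρ.re ≤ σ) : (ρ + a - 2 * σ).re ≤ -(σ - a) := by
  simp only [sub_re, add_re, ofReal_re, mul_re, re_ofNat, im_ofNat, ofReal_im]
  linarith

lemma norm_sub_div_add_sub_le_one (h : a < σ) (hre : ρ.re ≤ σ) :
    ‖(ρ - a) / (ρ + a - 2 * σ)‖ ≤ 1 := by
  rw [sub_div_eq_add_two_mul_div]
  exact norm_add_two_mul_div_le_one (sub_pos.mpr h).le (re_add_sub_two_mul_le hre)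

lemma re_one_sub_sub_div_add_sub_le (h : a < σ) (hre : ρ.re ≤ σ) :
    (1 - (ρ - a) / (ρ + a - 2 * σ)).re
      ≤ (2 * (σ - a) + 2 / (σ - a)) * (1 + |2 * σ - a|)
        * ((1 + |ρ.re|) / (1 + ‖ρ + a - 2 * σ‖ ^ 2)) := by
  have hc : 0 < σ - a := sub_pos.mpr h
  have hre_d : -(ρ + a - 2 * σ).re ≤ (1 + |2 * σ - a|) * (1 + |ρ.re|) := by
    simpa [sub_sub, add_comm] using sub_le_one_add_abs_mul_one_add_abs (2 * σ - a) ρ.re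
  calc (1 - (ρ - a) / (ρ + a - 2 * σ)).re
      ≤ (2 * (σ - a) + 2 / (σ - a)) * (-(ρ + a - 2 * σ).re / (1 + ‖ρ + a - 2 * σ‖ ^ 2)) := by
        rw [sub_div_eq_add_two_mul_div, ← mul_div_assoc]
        exact re_one_sub_add_two_mul_div_le hc (re_add_sub_two_mul_le hre)
    _ ≤ (2 * (σ - a) + 2 / (σ - a))
          * ((1 + |2 * σ - a|) * (1 + |ρ.re|) / (1 + ‖ρ + a - 2 * σ‖ ^ 2)) :=
        mul_le_mul_of_nonneg_left (div_le_div_of_nonneg_right hre_d (by positivity))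
          (by linarith [div_pos two_pos hc])
    _ = _ := by ring

end

theorem bombieri_lagarias_forward_general (a σ : ℝ) (h : a < σ) (ι : Type*)
    (ρ : ι → ℂ)
    (hsum : Summable fun i => (1 + |(ρ i).re|) / (1 + ‖ρ i + a - 2 * σ‖ ^ 2))
    (hre : ∀ i, (ρ i).re ≤ σ) (n : ℕ) :
    Summable (fun i => (1 - ((ρ i - a) / (ρ i + a - 2 * σ)) ^ n).re) ∧
    0 ≤ ∑' i, (1 - ((ρ i - a) / (ρ i + a - 2 * σ)) ^ n).re := by
  have hdisc i := norm_sub_div_add_sub_le_one h (hre i)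
  have hnonneg i := re_one_sub_pow_nonneg (hdisc i) n
  have hbound i : (1 - ((ρ i - a) / (ρ i + a - 2 * σ)) ^ n).re
      ≤ (n ^ 2 * ((2 * (σ - a) + 2 / (σ - a)) * (1 + |2 * σ - a|)))
        * ((1 + |(ρ i).re|) / (1 + ‖ρ i + a - 2 * σ‖ ^ 2)) := by
    calc _ ≤ (n : ℝ) ^ 2 * (1 - (ρ i - a) / (ρ i + a - 2 * σ)).re := re_one_sub_pow_le (hdisc i) n
      _ ≤ _ := by
        rw [mul_assoc]
        exact mul_le_mul_of_nonneg_left (re_one_sub_sub_div_add_sub_le h (hre i)) (by positivity)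
  exact ⟨.of_nonneg_of_le hnonneg hbound (hsum.mul_left _), tsum_nonneg hnonneg⟩

/-- Generalized Bombieri–Lagarias theorem, (a)⇒(b), case `a < σ`. -/
theorem bombieri_lagarias_forward (a σ : ℝ) (h : a < σ) (ι : Type*) [Countable ι]
    (ρ : ι → ℂ) (hne : ∀ i, ρ i ≠ 2 * σ - a)
    (hsum : Summable fun i => (1 + |(ρ i).re|) / (1 + ‖ρ i + a - 2 * σ‖ ^ 2))
    (hre : ∀ i, (ρ i).re ≤ σ) (n : ℕ) (hn : 0 < n) :
    Summable (fun i => (1 - ((ρ i - a) / (ρ i + a - 2 * σ)) ^ n).re) ∧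
    0 ≤ ∑' i, (1 - ((ρ i - a) / (ρ i + a - 2 * σ)) ^ n).re :=
  bombieri_lagarias_forward_general a σ h ι ρ hsum hre n
end

section
/- Let a and σ be real numbers with a < σ, and let ι be a countable index type with ρ : ι → ℂ such that ρ(i) ≠ 2σ − a for all i, the family i ↦ (1 + |Re ρ(i)|)/(1 + |ρ(i) + a − 2σ|²) is summable, and some index i₀ satisfies Re ρ(i₀) > σ. Then the supremum t of |(ρ(i) − a)/(ρ(i) + a − 2σ)| − 1 over all i is attained, is positive, and is attained at only finitely many indices. -/
open Complex

/-!
With `w = ρ - (2σ - a)`, where `2σ - a` is the mirror image of `a` in the line `Re = σ`,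
one has `‖ρ - a‖² = ‖w‖² + 4(σ - a)(Re ρ - σ)`. Hence the quotient `‖(ρ - a)/w‖`
exceeds `1` at `i₀`, and exceeding `1 + c` forces `Re ρ - σ ≳ c ‖w‖²`, which makes the summand
`(1 + |Re ρ|)/(1 + ‖w‖²)` bounded below. A summable family is bounded below by a positive constant
only finitely often, so every positive superlevel set of `‖(ρ - a)/w‖ - 1` is finite, and its
maximum over the finite superlevel set at the positive height reached at `i₀` is the global one.
-/

theorem norm_sub_sq_eq_norm_add_sub_sq_add (z : ℂ) (a σ : ℝ) :
    ‖z - a‖ ^ 2 = ‖z + a - 2 * σ‖ ^ 2 + 4 * (σ - a) * (z.re - σ) := by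
  simp only [Complex.sq_norm, normSq_apply, sub_re, add_re, sub_im, add_im, ofReal_re, ofReal_im,
    mul_re, mul_im, re_ofNat, im_ofNat]
  ring

theorem one_lt_norm_div_of_lt_re {a σ : ℝ} (h : a < σ) {z : ℂ} (hz : σ < z.re)
    (hne : z ≠ 2 * σ - a) : 1 < ‖(z - a) / (z + a - 2 * σ)‖ := by
  have hw : 0 < ‖z + a - 2 * σ‖ :=
    norm_pos_iff.mpr fun h0 => hne (by linear_combination h0)
  have hsq : ‖z + a - 2 * σ‖ ^ 2 < ‖z - a‖ ^ 2 := by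
    rw [norm_sub_sq_eq_norm_add_sub_sq_add z a σ]
    nlinarith
  rw [norm_div, one_lt_div hw]
  exact lt_of_pow_lt_pow_left₀ 2 (norm_nonneg _) hsq

theorem mul_norm_sq_le_re_sub_of_le_norm_div {a σ : ℝ} (h : a < σ) {c : ℝ} (hc : 0 ≤ c)
    {z : ℂ} (hz : 1 + c ≤ ‖(z - a) / (z + a - 2 * σ)‖) :
    c * (c + 2) / (4 * (σ - a)) * ‖z + a - 2 * σ‖ ^ 2 ≤ z.re - σ := by
  have hw : 0 < ‖z + a - 2 * σ‖ := by
    refine norm_pos_iff.mpr fun h0 => ?_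
    rw [h0, div_zero, norm_zero] at hz
    linarith
  have hle : (1 + c) * ‖z + a - 2 * σ‖ ≤ ‖z - a‖ := by
    rwa [norm_div, le_div_iff₀ hw] at hz
  have hsq : (1 + c) ^ 2 * ‖z + a - 2 * σ‖ ^ 2 ≤ ‖z - a‖ ^ 2 := by
    rw [← mul_pow]
    exact pow_le_pow_left₀ (by positivity) hle 2
  rw [norm_sub_sq_eq_norm_add_sub_sq_add z a σ] at hsq
  rw [div_mul_eq_mul_div, div_le_iff₀ (by linarith)]
  nlinarith

theorem min_div_le_div_of_mul_le_sub {x σ s ε : ℝ} (hs : 0 ≤ s) (hx : ε * s ≤ x - σ) :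
    min 1 ε / (1 + |σ|) ≤ (1 + |x|) / (1 + s) := by
  rw [div_le_div_iff₀ (by positivity) (by positivity)]
  calc min 1 ε * (1 + s) ≤ 1 + ε * s := by
        nlinarith [min_le_left 1 ε, min_le_right 1 ε]
    _ ≤ 1 + |x| + |σ| := by linarith [le_abs_self x, neg_abs_le σ]
    _ ≤ (1 + |x|) * (1 + |σ|) := by nlinarith [abs_nonneg x, abs_nonneg σ]

theorem Summable.finite_setOf_le {ι : Type*} {f : ι → ℝ} (hf : Summable f) {δ : ℝ}
    (hδ : 0 < δ) : {i | δ ≤ f i}.Finite := by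
  simpa only [not_lt] using
    Filter.eventually_cofinite.mp (hf.tendsto_cofinite_zero.eventually_lt_const hδ)

theorem exists_isGreatest_range_of_finite_setOf_le {ι : Type*} {f : ι → ℝ}
    (hfin : ∀ c, 0 < c → {i | c ≤ f i}.Finite) {i₀ : ι} (hi₀ : 0 < f i₀) :
    ∃ t, IsGreatest (Set.range f) t ∧ 0 < t ∧ {i | f i = t}.Finite := by
  obtain ⟨j, hj, hjmax⟩ := Set.exists_max_image _ f (hfin _ hi₀) ⟨i₀, le_refl (f i₀)⟩
  refine ⟨f j, ⟨⟨j, rfl⟩, ?_⟩, hi₀.trans_le hj, (hfin _ hi₀).subset fun i hi => ?_⟩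
  · rintro _ ⟨i, rfl⟩
    rcases le_total (f i₀) (f i) with hi | hi
    · exact hjmax i hi
    · exact hi.trans hj
  · exact hj.trans_eq hi.symm

theorem sup_abs_quotient_attained_general (a σ : ℝ) (h : a < σ) (ι : Type*)
    (ρ : ι → ℂ) (hne : ∀ i, ρ i ≠ 2 * σ - a)
    (hsum : Summable fun i => (1 + |(ρ i).re|) / (1 + ‖ρ i + a - 2 * σ‖ ^ 2))
    (i₀ : ι) (hi₀ : σ < (ρ i₀).re) :
    ∃ t : ℝ,
      IsGreatest (Set.range fun i => ‖(ρ i - a) / (ρ i + a - 2 * σ)‖ - 1) t ∧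
      0 < t ∧
      {i : ι | ‖(ρ i - a) / (ρ i + a - 2 * σ)‖ - 1 = t}.Finite := by
  have hpos : 0 < ‖(ρ i₀ - a) / (ρ i₀ + a - 2 * σ)‖ - 1 :=
    sub_pos.mpr (one_lt_norm_div_of_lt_re h hi₀ (hne i₀))
  refine exists_isGreatest_range_of_finite_setOf_le (fun c hc => ?_) hpos
  set ε := c * (c + 2) / (4 * (σ - a))
  refine (hsum.finite_setOf_le (δ := min 1 ε / (1 + |σ|)) (by positivity)).subset
    fun i hi => min_div_le_div_of_mul_le_sub (sq_nonneg _)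
      (mul_norm_sq_le_re_sub_of_le_norm_div h hc.le (le_sub_iff_add_le'.mp hi))

/-- if `a < σ`, the summability condition holds, and some `ρ(i₀)` has
`Re ρ(i₀) > σ`, then the supremum `t` of `|(ρ(i) − a)/(ρ(i) + a − 2σ)| − 1` over all `i`
is attained, is positive, and is attained at only finitely many indices. -/
theorem sup_abs_quotient_attained (a σ : ℝ) (h : a < σ) (ι : Type*) [Countable ι]
    (ρ : ι → ℂ) (hne : ∀ i, ρ i ≠ 2 * σ - a)
    (hsum : Summable fun i => (1 + |(ρ i).re|) / (1 + ‖ρ i + a - 2 * σ‖ ^ 2))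
    (i₀ : ι) (hi₀ : σ < (ρ i₀).re) :
    ∃ t : ℝ,
      IsGreatest (Set.range fun i => ‖(ρ i - a) / (ρ i + a - 2 * σ)‖ - 1) t ∧
      0 < t ∧
      {i : ι | ‖(ρ i - a) / (ρ i + a - 2 * σ)‖ - 1 = t}.Finite :=
  sup_abs_quotient_attained_general a σ h ι ρ hne hsum i₀ hi₀
end
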